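/- Let D be the discriminant of a real quadratic field, let 0 < ε ≤ 1/2, and suppose there exists an odd prime p with D a quadratic residue modulo p (i.e. the Legendre symbol (D/p) = 1) and (1/2)√D ≤ p ≤ (1/2 + ε)√D. Then the real quadratic field ℚ(√D) has a generator α with H(α) ≤ (1/2 + ε)√D. -/

import Mathlib

/-!
Take `a = p`. As `D` is a square modulo `p` and a square modulo `4`, and `p` is odd, there is `b`
with `|b| ≤ p` and `b² ≡ D (mod 4p)`; put `c = (b² - D) / 4p`. The form `p x² + b x + c` has
discriminant `D`, so its root `(-b + √D) / 2p` generates `K`; it is primitive because `p ∤ D`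
forces `p ∤ b`, and `D ≤ 4p²` forces `|c| ≤ p`, so its height is `p ≤ (1/2 + ε)√D`.
Both `√D ∈ K` and `D ≡ t² (mod 4)` come from an integral basis `1, ω` of `𝓞 K`: if
`ω² = c₀ + c₁ ω`, then `D = c₁² + 4c₀ = (2ω - c₁)²`.
-/

open NumberField Module IntermediateField

theorem Int.exists_abs_le_sq_modEq_four_mul {p : ℕ} (hodd : Odd p) {D t : ℤ}
    (hD : IsSquare (D : ZMod p)) (ht : t ^ 2 ≡ D [ZMOD 4]) :
    ∃ b : ℤ, |b| ≤ p ∧ b ^ 2 ≡ D [ZMOD 4 * p] := by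
  obtain ⟨x, hx⟩ := hD
  obtain ⟨r, rfl⟩ := ZMod.intCast_surjective x
  have hr : r ^ 2 ≡ D [ZMOD p] :=
    (ZMod.intCast_eq_intCast_iff _ _ p).mp (by push_cast; rw [hx, sq])
  obtain ⟨k, hk⟩ := hodd
  obtain ⟨u, hut, hur⟩ : ∃ u : ℤ, u ≡ t [ZMOD 2] ∧ u ≡ r [ZMOD p] :=
    ⟨r + p * (t - r), Int.modEq_iff_dvd.mpr ⟨(r - t) * k, by push_cast [hk]; ring⟩,
      Int.modEq_iff_dvd.mpr ⟨r - t, by ring⟩⟩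
  have hp0 : 0 < 2 * p := by omega
  have hbu : u.bmod (2 * p) ≡ u [ZMOD 2 * p] := Int.bmod_emod
  refine ⟨u.bmod (2 * p), ?_, ?_⟩
  · have hlow := Int.le_bmod (x := u) hp0
    have hhigh := Int.bmod_lt (x := u) hp0
    push_cast at hlow hhigh
    rw [abs_le]; omega
  have hcop : Nat.Coprime 4 p := by
    simpa using Nat.Coprime.pow_left 2 (Nat.coprime_two_left.mpr ⟨k, hk⟩)
  refine (Int.modEq_and_modEq_iff_modEq_mul (by simpa using hcop)).mp ⟨?_, ?_⟩
  · obtain ⟨m, hm⟩ := Int.modEq_iff_dvd.mp ((hbu.of_mul_right _).trans hut).symm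
    refine Int.ModEq.trans (Int.modEq_iff_dvd.mpr ⟨-(m * t + m ^ 2), ?_⟩) ht
    rw [show u.bmod (2 * p) = t + 2 * m by linarith]; ring
  · exact (((hbu.of_mul_left _).trans hur).pow 2).trans hr

namespace Module.Basis

theorem exists_basis_zero_eq_of_gcd_repr_eq_one {M : Type*} [AddCommGroup M] (e : Basis (Fin 2) ℤ M)
    {v : M} (hv : Int.gcd (e.repr v 0) (e.repr v 1) = 1) : ∃ b : Basis (Fin 2) ℤ M, b 0 = v := by
  set a₀ := e.repr v 0
  set a₁ := e.repr v 1
  have hbezout := Int.gcd_eq_gcd_ab a₀ a₁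
  rw [hv, Nat.cast_one] at hbezout
  let A : Matrix (Fin 2) (Fin 2) ℤ := !![a₀, -Int.gcdB a₀ a₁; a₁, Int.gcdA a₀ a₁]
  have hA : A.det = 1 := by rw [Matrix.det_fin_two_of, hbezout]; ring
  refine ⟨e.map (A.toLinearEquiv e (by rw [hA]; exact isUnit_one)), ?_⟩
  rw [Basis.map_apply]
  change Matrix.toLin e e A (e 0) = v
  rw [Matrix.toLin_self, Fin.sum_univ_two, ← e.sum_repr v, Fin.sum_univ_two]
  simp [A, a₀, a₁]

theorem gcd_repr_one_eq_one {R : Type*} [CommRing R] (e : Basis (Fin 2) ℤ R) :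
    Int.gcd (e.repr 1 0) (e.repr 1 1) = 1 := by
  obtain ⟨a₀, ha₀⟩ := Int.gcd_dvd_left (e.repr 1 0) (e.repr 1 1)
  obtain ⟨a₁, ha₁⟩ := Int.gcd_dvd_right (e.repr 1 0) (e.repr 1 1)
  set g := Int.gcd (e.repr 1 0) (e.repr 1 1)
  have hone : algebraMap ℤ R g * (a₀ • e 0 + a₁ • e 1) = 1 := by
    rw [← Algebra.smul_def, smul_add, smul_smul, smul_smul, ← ha₀, ← ha₁, ← Fin.sum_univ_two
      (f := fun i => e.repr 1 i • e i), e.sum_repr]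
  -- taking norms, `g ^ 2` divides `1`
  have hnorm := congrArg (Algebra.norm ℤ) hone
  rw [map_mul, Algebra.norm_algebraMap_of_basis e, Fintype.card_fin,
    (Algebra.norm ℤ).map_one] at hnorm
  have : (g : ℤ) ∣ 1 := ⟨g * Algebra.norm ℤ (a₀ • e 0 + a₁ • e 1), by rw [← hnorm]; ring⟩
  exact_mod_cast Int.eq_one_of_dvd_one (by positivity) this

theorem exists_basis_zero_eq_one {R : Type*} [CommRing R] (e : Basis (Fin 2) ℤ R) :
    ∃ b : Basis (Fin 2) ℤ R, b 0 = 1 :=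
  e.exists_basis_zero_eq_of_gcd_repr_eq_one e.gcd_repr_one_eq_one

section
variable {A R : Type*} [CommRing A] [CommRing R] [Algebra A R] (b : Basis (Fin 2) A R)

theorem sq_one_eq_of_zero_eq_one (hb : b 0 = 1) :
    b 1 ^ 2 = b.repr (b 1 ^ 2) 0 • 1 + b.repr (b 1 ^ 2) 1 • b 1 := by
  conv_lhs => rw [← b.sum_repr (b 1 ^ 2), Fin.sum_univ_two, hb]

theorem discr_of_zero_eq_one (hb : b 0 = 1) :
    Algebra.discr A b = b.repr (b 1 ^ 2) 1 ^ 2 + 4 * b.repr (b 1 ^ 2) 0 := by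
  set c₀ := b.repr (b 1 ^ 2) 0
  set c₁ := b.repr (b 1 ^ 2) 1
  have htrace (x : R) : Algebra.trace A R x = b.repr x 0 + b.repr (x * b 1) 1 := by
    rw [Algebra.trace_eq_matrix_trace b, Matrix.trace_fin_two, Algebra.leftMulMatrix_eq_repr_mul,
      Algebra.leftMulMatrix_eq_repr_mul, hb, mul_one]
  have h1 : Algebra.trace A R 1 = 2 := by
    rw [htrace, one_mul, ← hb, b.repr_self, b.repr_self]
    simp only [Finsupp.single_eq_same]
    norm_num
  have hω : Algebra.trace A R (b 1) = c₁ := by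
    rw [htrace, b.repr_self, ← sq]; simp [c₁]
  have hω2 : Algebra.trace A R (b 1 ^ 2) = c₁ ^ 2 + 2 * c₀ := by
    rw [b.sq_one_eq_of_zero_eq_one hb, map_add, map_smul, map_smul, h1, hω, smul_eq_mul,
      smul_eq_mul]
    ring
  rw [Algebra.discr_def, Matrix.det_fin_two]
  simp only [Algebra.traceMatrix_apply, Algebra.traceForm_apply, hb, one_mul, mul_one, ← sq, hω,
    hω2, one_pow, h1]
  ring

end

end Module.Basis

theorem NumberField.RingOfIntegers.exists_intCast_eq_of_coe_mem_bot {K : Type*} [Field K]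
    [NumberField K] {x : 𝓞 K} (hx : (x : K) ∈ (⊥ : IntermediateField ℚ K)) : ∃ m : ℤ, x = m := by
  obtain ⟨q, hq⟩ := IntermediateField.mem_bot.mp hx
  have hq_int : IsIntegral ℤ q := .tower_bot_of_field (B := K) (by rw [hq]; exact x.isIntegral_coe)
  obtain ⟨m, rfl⟩ := IsIntegrallyClosed.isIntegral_iff.mp hq_int
  exact ⟨m, RingOfIntegers.coe_injective (by simpa using hq.symm)⟩

theorem NumberField.exists_sq_eq_discr {K : Type*} [Field K] [NumberField K]
    (hdeg : finrank ℚ K = 2) :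
    ∃ (s : K) (t : ℤ), s ^ 2 = discr K ∧ s ∉ (⊥ : IntermediateField ℚ K) ∧
      t ^ 2 ≡ discr K [ZMOD 4] := by
  obtain ⟨b, hb⟩ :=
    (finBasisOfFinrankEq ℤ (𝓞 K) ((RingOfIntegers.rank K).trans hdeg)).exists_basis_zero_eq_one
  set c₀ := b.repr (b 1 ^ 2) 0
  set c₁ := b.repr (b 1 ^ 2) 1
  have hdiscr : discr K = c₁ ^ 2 + 4 * c₀ := by
    rw [← discr_eq_discr K b, b.discr_of_zero_eq_one hb]
  have hsq := b.sq_one_eq_of_zero_eq_one hb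
  rw [zsmul_eq_mul, zsmul_eq_mul, mul_one] at hsq
  have hw : (2 * b 1 - c₁) ^ 2 = ((discr K : ℤ) : 𝓞 K) := by
    rw [hdiscr]; push_cast; linear_combination 4 * hsq
  refine ⟨((2 * b 1 - c₁ : 𝓞 K) : K), c₁, ?_, ?_, ?_⟩
  · rw [← map_pow, hw, map_intCast]
  · intro hmem
    obtain ⟨m, hm⟩ := RingOfIntegers.exists_intCast_eq_of_coe_mem_bot hmem
    have h2 : (2 : ℤ) • b 1 = (c₁ + m) • b 0 := by
      rw [hb, zsmul_eq_mul, zsmul_eq_mul, mul_one]; push_cast; linear_combination hm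
    have h3 := congrArg (fun x => b.repr x 1) h2
    simp only [map_zsmul, b.repr_self] at h3
    simp at h3
  · rw [hdiscr]; exact Int.modEq_iff_dvd.mpr ⟨c₀, by ring⟩

theorem abs_le_of_discrim_eq {R : Type*} [CommRing R] [LinearOrder R] [IsStrictOrderedRing R]
    {a b c D : R} (ha : 0 < a) (hb : |b| ≤ a) (hD : discrim a b c = D) (hD0 : 0 ≤ D)
    (hDa : D ≤ 4 * a ^ 2) : |c| ≤ a := by
  rw [discrim] at hD
  have hb2 : b ^ 2 ≤ a ^ 2 := sq_le_sq' (abs_le.mp hb).1 (abs_le.mp hb).2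
  rw [abs_le]
  constructor <;> nlinarith

theorem Int.gcd_gcd_eq_one_of_not_dvd_discrim {p : ℕ} (hp : p.Prime) {b c : ℤ}
    (h : ¬ (p : ℤ) ∣ discrim (p : ℤ) b c) : Int.gcd (Int.gcd p b) c = 1 := by
  have hpb : ¬ p ∣ b.natAbs := fun hdvd => h <| by
    obtain ⟨m, hm⟩ := Int.natCast_dvd.mpr hdvd
    exact ⟨p * m ^ 2 - 4 * c, by rw [discrim, hm]; ring⟩
  have hpb' : Int.gcd p b = 1 := by
    rw [Int.gcd_eq_natAbs, Int.natAbs_natCast, (hp.coprime_iff_not_dvd.mpr hpb).gcd_eq_one]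
  rw [hpb', Nat.cast_one, Int.gcd_one_left]

theorem IntermediateField.adjoin_simple_eq_top_of_prime_finrank {F E : Type*} [Field F] [Field E]
    [Algebra F E] (h : (finrank F E).Prime) {α : E} (hα : α ∉ (⊥ : IntermediateField F E)) :
    F⟮α⟯ = ⊤ :=
  ((isSimpleOrder_of_finrank_prime F E h).eq_bot_or_eq_top _).resolve_left
    (adjoin_simple_eq_bot_iff.not.mpr hα)

theorem real_quadratic_generator_from_prime
    (K : Type*) [Field K] [NumberField K]
    (hdeg : Module.finrank ℚ K = 2)
    (D : ℤ) (hDK : NumberField.discr K = D) (hD : 0 < D)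
    (ε : ℝ)
    (p : ℕ) (hp : p.Prime) (hodd : Odd p)
    (hleg : @legendreSym p ⟨hp⟩ D = 1)
    (hp1 : (1 / 2) * Real.sqrt (D : ℝ) ≤ (p : ℝ))
    (hp2 : (p : ℝ) ≤ (1 / 2 + ε) * Real.sqrt (D : ℝ)) :
    ∃ (α : K) (a b c : ℤ), ℚ⟮α⟯ = ⊤ ∧
      (a : K) * α ^ 2 + (b : K) * α + (c : K) = 0 ∧
      Int.gcd (Int.gcd a b) c = 1 ∧
      ((max |a| (max |b| |c|) : ℤ) : ℝ) ≤ (1 / 2 + ε) * Real.sqrt (D : ℝ) := by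
  have : Fact p.Prime := ⟨hp⟩
  have hpD : ¬ (p : ℤ) ∣ D := fun h => by
    rw [(legendreSym.eq_zero_iff p D).mpr ((ZMod.intCast_zmod_eq_zero_iff_dvd D p).mpr h)] at hleg
    exact zero_ne_one hleg
  have hDsq : IsSquare (D : ZMod p) :=
    (legendreSym.eq_one_iff p (mt (ZMod.intCast_zmod_eq_zero_iff_dvd D p).mp hpD)).mp hleg
  have hDp : D ≤ 4 * (p : ℤ) ^ 2 := by
    have hsqrt := (Real.sqrt_le_iff.mp (show √(D : ℝ) ≤ 2 * p by linarith)).2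
    exact_mod_cast (show (D : ℝ) ≤ 4 * p ^ 2 by linarith)
  obtain ⟨s, t, hs, hs_bot, ht⟩ := NumberField.exists_sq_eq_discr hdeg
  rw [hDK] at hs ht
  obtain ⟨b, hb, hbD⟩ := Int.exists_abs_le_sq_modEq_four_mul hodd hDsq ht
  obtain ⟨c, hc⟩ := (Int.modEq_iff_dvd.mp hbD.symm)
  have hdiscrim : discrim (p : ℤ) b c = D := by rw [discrim]; linarith
  have hpK : (p : K) ≠ 0 := Nat.cast_ne_zero.mpr hp.ne_zero
  set α : K := (-b + s) / (2 * p) with hα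
  have hroot : (p : K) * (α * α) + b * α + c = 0 := by
    refine (quadratic_eq_zero_iff hpK (s := s) ?_ α).mpr (.inl rfl)
    rw [← sq, hs, ← hdiscrim]; simp [discrim]
  have hα_bot : α ∉ (⊥ : IntermediateField ℚ K) := fun h => hs_bot <| by
    rw [show s = 2 * p * α + b by rw [hα]; field_simp; ring]
    exact add_mem (mul_mem (mul_mem (ofNat_mem _ 2) (_root_.natCast_mem _ p)) h) (intCast_mem _ b)
  refine ⟨α, p, b, c, adjoin_simple_eq_top_of_prime_finrank (hdeg ▸ Nat.prime_two) hα_bot,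
    by simpa [sq] using hroot, Int.gcd_gcd_eq_one_of_not_dvd_discrim hp (hdiscrim ▸ hpD), ?_⟩
  have hc : |c| ≤ p := abs_le_of_discrim_eq (by exact_mod_cast hp.pos) hb hdiscrim hD.le hDp
  have hheight : max |(p : ℤ)| (max |b| |c|) ≤ p := max_le (Nat.abs_cast p).le (max_le hb hc)
  exact (Int.cast_le.mpr hheight).trans (by exact_mod_cast hp2)
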